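/- Theorem 3.1 (resolvent formula). Let λ ∈ ℂ, set I(x) := exp(−i ∫₀ˣ V(t) dt + iλx) for x ∈ [0,2π], and assume D := I(2π) − i ∫₀^{2π} I(t) k(t) dt − ρ ≠ 0. Let g ∈ L²((0,2π); ℂ) and define f : [0,2π] → ℂ by f(x) = (−i / I(x)) · [ ( (∫₀^{2π} I(t) g(t) dt) / D ) · ( i ∫₀ˣ I(t) k(t) dt + ρ ) + ∫₀ˣ I(t) g(t) dt ]. Then f is absolutely continuous with some derivative f′ ∈ L¹(0,2π), satisfies f(0) = ρ f(2π), and satisfies i f′(x) + (V(x) − λ) f(x) + f(2π) k(x) = g(x) for almost every x ∈ (0,2π). -/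

import Mathlib

/-!
Put `ζ = iV - iλ`, so that `1 / I(x) = exp ∫₀ˣ ζ`, and `c = (∫₀^{2π} I g) / D`. On `[0, 2π]`
the function `f` is then the variation-of-constants solution
`y(x) = exp (∫₀ˣ ζ) · (-icρ + ∫₀ˣ exp (-∫₀ᵗ ζ) (c k - i g)(t) dt)` of `y' = ζ y + c k - i g`.
Being a product of exponentials and primitives of integrable functions, `y` is absolutely
continuous, and by Lebesgue's differentiation theorem it has derivative `ζ y + c k - i g` almost
everywhere; hence it is the integral of that derivative. The definition of `D` is exactly what
makes `f(2π) = -ic`, which gives both `f(0) = -icρ = ρ f(2π)` and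
`i f' + (V - λ) f + f(2π) k = g`.
-/

open MeasureTheory Real Complex

/-- `f : [0,2π] → ℂ` is absolutely continuous with derivative `f'`:
`f' ∈ L¹(0,2π)` and `f x = f 0 + ∫₀ˣ f'` for all `x ∈ [0,2π]`. -/
def IsACWithDeriv (f f' : ℝ → ℂ) : Prop :=
  MeasureTheory.IntegrableOn f' (Set.Ioc 0 (2 * Real.pi)) ∧
    ∀ x ∈ Set.Icc (0:ℝ) (2 * Real.pi), f x = f 0 + ∫ t in (0:ℝ)..x, f' t

open Set Filter

theorem MeasureTheory.MemLp.intervalIntegrable {E : Type*} [NormedAddCommGroup E] {φ : ℝ → E}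
    {p : ENNReal} {a b : ℝ} (hab : a ≤ b) (hp : 1 ≤ p)
    (hφ : MemLp φ p (volume.restrict (Ioo a b))) : IntervalIntegrable φ volume a b := by
  rw [intervalIntegrable_iff_integrableOn_Ioo_of_le hab]
  exact (hφ.mono_exponent hp).integrable le_rfl

theorem intervalIntegral.integral_const_mul_sub_const {φ : ℝ → ℂ} {a x : ℝ} (α β : ℂ)
    (hφ : IntervalIntegrable φ volume a x) :
    ∫ t in a..x, (α * φ t - β) = α * (∫ t in a..x, φ t) - (x - a) * β := by
  rw [intervalIntegral.integral_sub (hφ.const_mul α) intervalIntegrable_const,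
    intervalIntegral.integral_const_mul, intervalIntegral.integral_const, real_smul]
  push_cast
  rfl

namespace AbsolutelyContinuousOnInterval

variable {X Y : Type*} [PseudoMetricSpace X] [PseudoMetricSpace Y] {a b : ℝ}

theorem of_dist_le {f : ℝ → X} {g : ℝ → Y} (hg : AbsolutelyContinuousOnInterval g a b)
    (h : ∀ x ∈ uIcc a b, ∀ y ∈ uIcc a b, dist (f x) (f y) ≤ dist (g x) (g y)) :
    AbsolutelyContinuousOnInterval f a b := by
  refine squeeze_zero' (Eventually.of_forall fun _ ↦ Finset.sum_nonneg fun _ _ ↦ dist_nonneg)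
    ?_ hg
  filter_upwards [eventually_inf_principal.2 (Eventually.of_forall fun E hE ↦ hE)] with E hE
  exact Finset.sum_le_sum fun i hi ↦ h _ (hE.1 i hi).1 _ (hE.1 i hi).2

theorem complex_exp {Z : ℝ → ℂ} (hZ : AbsolutelyContinuousOnInterval Z a b) :
    AbsolutelyContinuousOnInterval (fun x ↦ exp (Z x)) a b := by
  -- `exp` is `Real.exp M`-Lipschitz on the ball of radius `M` that contains `Z '' [a, b]`.
  obtain ⟨M, hM⟩ := hZ.exists_bound
  refine (hZ.const_smul (Real.exp M)).of_dist_le fun x hx y hy ↦ ?_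
  rw [dist_smul₀, Real.norm_of_nonneg (Real.exp_pos M).le, dist_eq_norm, dist_eq_norm]
  refine (convex_closedBall (0 : ℂ) M).norm_image_sub_le_of_norm_deriv_le
    (fun _ _ ↦ differentiableAt_exp) (fun w hw ↦ ?_) (by simpa using hM y hy)
    (by simpa using hM x hx)
  rw [Complex.deriv_exp, norm_exp]
  exact Real.exp_le_exp.2 ((re_le_norm w).trans (by simpa using hw))

end AbsolutelyContinuousOnInterval

section Primitive

variable {F : Type*} [NormedAddCommGroup F] [NormedSpace ℝ F] {a b : ℝ}

theorem IntervalIntegrable.absolutelyContinuousOnInterval_intervalIntegral' {φ : ℝ → F} {c : ℝ}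
    (hφ : IntervalIntegrable φ volume a b) (hc : c ∈ uIcc a b) :
    AbsolutelyContinuousOnInterval (fun x ↦ ∫ t in c..x, φ t) a b := by
  refine (hφ.norm.absolutelyContinuousOnInterval_intervalIntegral hc).of_dist_le
    fun x hx y hy ↦ ?_
  have hint : ∀ z ∈ uIcc a b, IntervalIntegrable φ volume c z := fun z hz ↦
    hφ.mono_set (uIcc_subset_uIcc hc hz)
  have hint' : ∀ z ∈ uIcc a b, IntervalIntegrable (fun t ↦ ‖φ t‖) volume c z := fun z hz ↦
    (hint z hz).norm
  rw [dist_comm, dist_eq_norm, dist_comm, Real.dist_eq,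
    intervalIntegral.integral_interval_sub_left (hint y hy) (hint x hx),
    intervalIntegral.integral_interval_sub_left (hint' y hy) (hint' x hx)]
  exact intervalIntegral.norm_integral_le_abs_integral_norm

theorem AbsolutelyContinuousOnInterval.eq_add_integral_of_ae_hasDerivAt [CompleteSpace F]
    {f φ : ℝ → F} (hf : AbsolutelyContinuousOnInterval f a b)
    (hφ : IntervalIntegrable φ volume a b)
    (hderiv : ∀ᵐ x, x ∈ uIcc a b → HasDerivAt f (φ x) x) :
    ∀ x ∈ uIcc a b, f x = f a + ∫ t in a..x, φ t := by
  obtain ⟨C, hC⟩ := (hf.sub (hφ.absolutelyContinuousOnInterval_intervalIntegral' left_mem_uIcc))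
    |>.const_of_ae_hasDerivAt_zero (by
      filter_upwards [hderiv, hφ.ae_hasDerivAt_integral] with x hfx hφx hx
      simpa using (hfx hx).sub (hφx hx a left_mem_uIcc))
  intro x hx
  have hCa := hC a left_mem_uIcc
  have hCx := hC x hx
  simp only [Pi.sub_apply, intervalIntegral.integral_same, sub_zero] at hCa hCx
  rw [hCa, ← hCx, sub_add_cancel]

end Primitive

section VariationOfConstants

variable {ζ h : ℝ → ℂ} {a b : ℝ} {y₀ : ℂ}

noncomputable def variationOfConstants (ζ h : ℝ → ℂ) (a : ℝ) (y₀ : ℂ) (x : ℝ) : ℂ :=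
  exp (∫ t in a..x, ζ t) * (y₀ + ∫ t in a..x, exp (-∫ s in a..t, ζ s) * h t)

@[simp]
theorem variationOfConstants_self : variationOfConstants ζ h a y₀ a = y₀ := by
  simp [variationOfConstants]

theorem intervalIntegrable_exp_neg_integral_mul (hζ : IntervalIntegrable ζ volume a b)
    (hh : IntervalIntegrable h volume a b) :
    IntervalIntegrable (fun t ↦ exp (-∫ s in a..t, ζ s) * h t) volume a b :=
  hh.continuousOn_mul
    (hζ.absolutelyContinuousOnInterval_intervalIntegral' left_mem_uIcc).continuousOn.neg.cexp

theorem absolutelyContinuousOnInterval_variationOfConstants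
    (hζ : IntervalIntegrable ζ volume a b) (hh : IntervalIntegrable h volume a b) :
    AbsolutelyContinuousOnInterval (variationOfConstants ζ h a y₀) a b := by
  have hW := (intervalIntegrable_exp_neg_integral_mul hζ hh)
    |>.absolutelyContinuousOnInterval_intervalIntegral' left_mem_uIcc
  exact (hζ.absolutelyContinuousOnInterval_intervalIntegral' left_mem_uIcc).complex_exp.fun_smul
    (hW.of_dist_le fun x _ y _ ↦ (dist_add_left y₀ _ _).le)

theorem ae_hasDerivAt_variationOfConstants (hζ : IntervalIntegrable ζ volume a b)
    (hh : IntervalIntegrable h volume a b) :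
    ∀ᵐ x, x ∈ uIcc a b → HasDerivAt (variationOfConstants ζ h a y₀)
      (ζ x * variationOfConstants ζ h a y₀ x + h x) x := by
  filter_upwards [hζ.ae_hasDerivAt_integral,
    (intervalIntegrable_exp_neg_integral_mul hζ hh).ae_hasDerivAt_integral] with x hZ hW hx
  refine ((hZ hx a left_mem_uIcc).cexp.mul ((hW hx a left_mem_uIcc).const_add y₀)).congr_deriv ?_
  rw [variationOfConstants, Complex.exp_neg]
  field_simp

theorem intervalIntegrable_mul_variationOfConstants_add (hζ : IntervalIntegrable ζ volume a b)
    (hh : IntervalIntegrable h volume a b) :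
    IntervalIntegrable (fun t ↦ ζ t * variationOfConstants ζ h a y₀ t + h t) volume a b :=
  (hζ.mul_continuousOn
    (absolutelyContinuousOnInterval_variationOfConstants hζ hh).continuousOn).add hh

theorem variationOfConstants_eq_add_integral (hζ : IntervalIntegrable ζ volume a b)
    (hh : IntervalIntegrable h volume a b) {x : ℝ} (hx : x ∈ uIcc a b) :
    variationOfConstants ζ h a y₀ x
      = y₀ + ∫ t in a..x, (ζ t * variationOfConstants ζ h a y₀ t + h t) := by
  simpa using (absolutelyContinuousOnInterval_variationOfConstants hζ hh)
    |>.eq_add_integral_of_ae_hasDerivAt (intervalIntegrable_mul_variationOfConstants_add hζ hh)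
      (ae_hasDerivAt_variationOfConstants hζ hh) x hx

end VariationOfConstants

section Resolvent

variable {V k g Iint : ℝ → ℂ} {lam ρ c : ℂ} {b : ℝ}

theorem resolvent_candidate_eq_variationOfConstants (hV : IntervalIntegrable V volume 0 b)
    (hk : IntervalIntegrable k volume 0 b) (hg : IntervalIntegrable g volume 0 b)
    (hIint : ∀ x : ℝ, Iint x = exp (-(I * ∫ t in (0:ℝ)..x, V t) + I * lam * x))
    {x : ℝ} (hx : x ∈ uIcc 0 b) :
    (-I / Iint x) * (c * (I * (∫ t in (0:ℝ)..x, Iint t * k t) + ρ) + ∫ t in (0:ℝ)..x, Iint t * g t)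
      = variationOfConstants (fun t ↦ I * V t - I * lam) (fun t ↦ c * k t - I * g t) 0
          (-I * c * ρ) x := by
  have hζ : IntervalIntegrable (fun t ↦ I * V t - I * lam) volume 0 b :=
    (hV.const_mul I).sub intervalIntegrable_const
  have hIint_eq : EqOn Iint (fun t ↦ exp (-∫ s in (0:ℝ)..t, (I * V s - I * lam))) (uIcc 0 b) :=
    fun t ht ↦ by
      rw [hIint]
      dsimp only
      rw [intervalIntegral.integral_const_mul_sub_const _ _
        (hV.mono_set (uIcc_subset_uIcc_left ht)), ofReal_zero]
      ring_nf
  have hIint_cont : ContinuousOn Iint (uIcc 0 b) :=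
    ((hζ.absolutelyContinuousOnInterval_intervalIntegral' left_mem_uIcc).continuousOn.neg.cexp
      ).congr hIint_eq
  have hsub : uIcc 0 x ⊆ uIcc 0 b := uIcc_subset_uIcc_left hx
  have hIk := (hk.continuousOn_mul hIint_cont).mono_set hsub
  have hIg := (hg.continuousOn_mul hIint_cont).mono_set hsub
  have hsplit : ∫ t in (0:ℝ)..x, Iint t * (c * k t - I * g t)
      = c * (∫ t in (0:ℝ)..x, Iint t * k t) - I * ∫ t in (0:ℝ)..x, Iint t * g t := by
    simp_rw [mul_sub, mul_left_comm (Iint _)]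
    rw [intervalIntegral.integral_sub (hIk.const_mul c) (hIg.const_mul I),
      intervalIntegral.integral_const_mul, intervalIntegral.integral_const_mul]
  have hexp : exp (∫ t in (0:ℝ)..x, (I * V t - I * lam)) = (Iint x)⁻¹ := by
    simp only [hIint_eq hx, Complex.exp_neg, inv_inv]
  rw [variationOfConstants, ← intervalIntegral.integral_congr fun t ht ↦
      congrArg (· * (c * k t - I * g t)) (hIint_eq (hsub ht)), hsplit, hexp, div_eq_mul_inv]
  linear_combination (-(Iint x)⁻¹ * c * ∫ t in (0:ℝ)..x, Iint t * k t) * I_sq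

end Resolvent

theorem resolvent_formula
    (V k : ℝ → ℂ)
    (hV : MeasureTheory.MemLp V ⊤ (MeasureTheory.volume.restrict (Set.Ioo 0 (2 * Real.pi))))
    (hk : MeasureTheory.MemLp k 2 (MeasureTheory.volume.restrict (Set.Ioo 0 (2 * Real.pi))))
    (ρ : ℂ) (lam : ℂ) (g : ℝ → ℂ)
    (hg : MeasureTheory.MemLp g 2 (MeasureTheory.volume.restrict (Set.Ioo 0 (2 * Real.pi))))
    (Iint : ℝ → ℂ)
    (hIint : ∀ x : ℝ, Iint x =
      Complex.exp (-(Complex.I * ∫ t in (0:ℝ)..x, V t) + Complex.I * lam * x))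
    (D : ℂ)
    (hD : D = Iint (2 * Real.pi)
      - Complex.I * (∫ t in (0:ℝ)..(2 * Real.pi), Iint t * k t) - ρ)
    (hD0 : D ≠ 0)
    (f : ℝ → ℂ)
    (hf : ∀ x : ℝ, f x = (-Complex.I / Iint x) *
      (((∫ t in (0:ℝ)..(2 * Real.pi), Iint t * g t) / D) *
          (Complex.I * (∫ t in (0:ℝ)..x, Iint t * k t) + ρ)
        + ∫ t in (0:ℝ)..x, Iint t * g t)) :
    ∃ f' : ℝ → ℂ, IsACWithDeriv f f' ∧
      f 0 = ρ * f (2 * Real.pi) ∧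
      ∀ᵐ x ∂(MeasureTheory.volume.restrict (Set.Ioo 0 (2 * Real.pi))),
        Complex.I * f' x + (V x - lam) * f x + f (2 * Real.pi) * k x = g x := by
  have hb : (0:ℝ) ≤ 2 * π := by positivity
  have hVi := hV.intervalIntegrable hb le_top
  have hki := hk.intervalIntegrable hb one_le_two
  have hgi := hg.intervalIntegrable hb one_le_two
  set c := (∫ t in (0:ℝ)..(2 * π), Iint t * g t) / D
  set ζ : ℝ → ℂ := fun t ↦ I * V t - I * lam
  set h : ℝ → ℂ := fun t ↦ c * k t - I * g t
  set y := variationOfConstants ζ h 0 (-I * c * ρ)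
  have hy0 : y 0 = -I * c * ρ := variationOfConstants_self
  have hζ : IntervalIntegrable ζ volume 0 (2 * π) := (hVi.const_mul I).sub intervalIntegrable_const
  have hh : IntervalIntegrable h volume 0 (2 * π) := (hki.const_mul c).sub (hgi.const_mul I)
  have hfy : EqOn f y (uIcc 0 (2 * π)) := fun x hx ↦
    (hf x).trans (resolvent_candidate_eq_variationOfConstants hVi hki hgi hIint hx)
  have hf2π : f (2 * π) = -I * c := by
    have hI : Iint (2 * π) ≠ 0 := by rw [hIint]; exact Complex.exp_ne_zero _
    have hQ : ∫ t in (0:ℝ)..(2 * π), Iint t * g t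
        = c * (Iint (2 * π) - I * (∫ t in (0:ℝ)..(2 * π), Iint t * k t) - ρ) := by
      rw [← hD, div_mul_cancel₀ _ hD0]
    rw [hf, hQ]
    field_simp
    ring
  refine ⟨fun t ↦ ζ t * y t + h t, ⟨?_, ?_⟩, ?_, ?_⟩
  · exact (intervalIntegrable_iff_integrableOn_Ioc_of_le hb).1
      (intervalIntegrable_mul_variationOfConstants_add hζ hh)
  · intro x hx
    rw [hfy (Icc_subset_uIcc hx), hfy left_mem_uIcc, hy0]
    exact variationOfConstants_eq_add_integral hζ hh (Icc_subset_uIcc hx)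
  · rw [hfy left_mem_uIcc, hy0, hf2π]
    ring
  · filter_upwards [ae_restrict_mem measurableSet_Ioo] with x hx
    rw [hfy (Icc_subset_uIcc (Ioo_subset_Icc_self hx)), hf2π]
    linear_combination ((V x - lam) * y x - g x) * I_sq
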